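/- Under the SOS feasibility setup, suppose there exist a symmetric positive definite P ∈ ℝ^{d×d}, a matrix W ∈ ℝ^{d_Z×d}, and symmetric positive definite matrices S_k ∈ ℝ^{(d_ζ d)×(d_ζ d)} (k = 1,…,K) such that for every x ∈ ℝⁿ and every k, U_k(x,P,W) + U_k(x,P,W)ᵀ = (ζ(x) ⊗ I_d)ᵀ S_k (ζ(x) ⊗ I_d). Then, setting Q := P⁻¹, H := W P⁻¹, S̄_k := (I_{d_ζ} ⊗ P⁻¹)ᵀ S_k (I_{d_ζ} ⊗ P⁻¹), and ε := the minimum over the smallest eigenvalues of Q and of S̄_1, …, S̄_K, the following hold: ε > 0; Q is symmetric and Q − ε I_d is positive semidefinite; for every k, S̄_k is symmetric and S̄_k − ε I_{d_ζ d} is positive semidefinite; and for every x ∈ ℝⁿ and every k, Y_k(x,Q,H) + Y_k(x,Q,H)ᵀ = (ζ(x) ⊗ I_d)ᵀ S̄_k (ζ(x) ⊗ I_d). -/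

import Mathlib

/-!
As `P` is symmetric, `U_k = -P M_k` with `M_k = Dz (F_k + G_k Z W)`, so after `Q = P⁻¹`,
`H = W Q` one has `Y_k = -M_k Q = Q U_k Q` and `Y_k + Y_kᵀ = Q (U_k + U_kᵀ) Q`. Since
`(ζ ⊗ I) Q = (I ⊗ Q) (ζ ⊗ I)`, the certificate `S_k` is transported to the congruent matrix
`S̄_k = (I ⊗ Q)ᵀ S_k (I ⊗ Q)`, which is again positive definite. A positive definite matrix
dominates `ε I` for every small enough `ε > 0`, and finitely many such conditions hold at once.
-/

open Matrix
open scoped Kronecker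

noncomputable section

/-- `ζ(x) ⊗ I_d` (with the column index canonically identified with `Fin d`). -/
def zetaI {n : ℕ} (dζ d : ℕ) (ζ : (Fin n → ℝ) → Fin dζ → ℝ) (x : Fin n → ℝ) :
    Matrix (Fin dζ × Fin d) (Fin d) ℝ :=
  ((Matrix.of fun i (_ : Unit) => ζ x i) ⊗ₖ (1 : Matrix (Fin d) (Fin d) ℝ)).submatrix
    id fun j => ((), j)

/-- `U_k(x,P,W) = −((P+Pᵀ)/2) · Dz(x) · (F_k(x) + G_k(x) Z(x) W)`. -/
def Umat {n m d dZ : ℕ} (Dz : (Fin n → ℝ) → Matrix (Fin d) (Fin n) ℝ)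
    (F : (Fin n → ℝ) → Matrix (Fin n) (Fin d) ℝ)
    (G : (Fin n → ℝ) → Matrix (Fin n) (Fin m) ℝ)
    (Z : (Fin n → ℝ) → Matrix (Fin m) (Fin dZ) ℝ)
    (x : Fin n → ℝ) (P : Matrix (Fin d) (Fin d) ℝ) (W : Matrix (Fin dZ) (Fin d) ℝ) :
    Matrix (Fin d) (Fin d) ℝ :=
  -(((1 : ℝ) / 2) • (P + Pᵀ)) * (Dz x * (F x + G x * Z x * W))

/-- `Y_k(x,Q,H) = −Dz(x) · (F_k(x) Q + G_k(x) Z(x) H)`. -/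
def Ymat {n m d dZ : ℕ} (Dz : (Fin n → ℝ) → Matrix (Fin d) (Fin n) ℝ)
    (F : (Fin n → ℝ) → Matrix (Fin n) (Fin d) ℝ)
    (G : (Fin n → ℝ) → Matrix (Fin n) (Fin m) ℝ)
    (Z : (Fin n → ℝ) → Matrix (Fin m) (Fin dZ) ℝ)
    (x : Fin n → ℝ) (Q : Matrix (Fin d) (Fin d) ℝ) (H : Matrix (Fin dZ) (Fin d) ℝ) :
    Matrix (Fin d) (Fin d) ℝ :=
  -(Dz x * (F x * Q + G x * Z x * H))

open Filter Topology
open scoped MatrixOrder ComplexOrder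

namespace Matrix
variable {𝕜 ι : Type*} [RCLike 𝕜]

lemma PosDef.transpose_eq {A : Matrix ι ι ℝ} (hA : A.PosDef) : Aᵀ = A :=
  (isHermitian_iff_isSymm.1 hA.1).eq

variable [DecidableEq ι]

lemma PosSemidef.sub_smul_one_of_le {A : Matrix ι ι 𝕜} {a b : ℝ}
    (hA : (A - a • 1).PosSemidef) (hba : b ≤ a) : (A - b • 1).PosSemidef := by
  have : (b • 1 : Matrix ι ι 𝕜) ≤ a • 1 := by
    rw [le_iff, ← sub_smul]
    exact PosSemidef.one.smul (sub_nonneg.2 hba)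
  exact le_iff.1 (this.trans (le_iff.2 hA))

variable [Fintype ι]

lemma PosDef.exists_pos_posSemidef_sub_smul_one {A : Matrix ι ι 𝕜} (hA : A.PosDef) :
    ∃ ε > (0 : ℝ), (A - ε • 1).PosSemidef := by
  cases isEmpty_or_nonempty ι
  · exact ⟨1, one_pos, Subsingleton.elim 0 (A - (1 : ℝ) • 1) ▸ .zero⟩
  obtain ⟨ε, hε, hle⟩ := (CFC.exists_pos_algebraMap_le_iff hA.1.isSelfAdjoint).2
    fun x hx => hA.isStrictlyPositive.spectrum_pos hx
  exact ⟨ε, hε, by simpa [le_iff, Algebra.algebraMap_eq_smul_one] using hle⟩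

lemma PosDef.eventually_posSemidef_sub_smul_one {A : Matrix ι ι 𝕜} (hA : A.PosDef) :
    ∀ᶠ ε in 𝓝[>] (0 : ℝ), (A - ε • 1).PosSemidef := by
  obtain ⟨ε₀, hε₀, hA₀⟩ := hA.exists_pos_posSemidef_sub_smul_one
  filter_upwards [Ioo_mem_nhdsGT hε₀] with ε hε
  exact hA₀.sub_smul_one_of_le hε.2.le

end Matrix

section Certificates

variable {n m d dζ dZ : ℕ} (Dz : (Fin n → ℝ) → Matrix (Fin d) (Fin n) ℝ)
  (F : (Fin n → ℝ) → Matrix (Fin n) (Fin d) ℝ) (G : (Fin n → ℝ) → Matrix (Fin n) (Fin m) ℝ)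
  (Z : (Fin n → ℝ) → Matrix (Fin m) (Fin dZ) ℝ) (x : Fin n → ℝ)

lemma zetaI_mul (ζ : (Fin n → ℝ) → Fin dζ → ℝ) (Q : Matrix (Fin d) (Fin d) ℝ) :
    zetaI dζ d ζ x * Q = ((1 : Matrix (Fin dζ) (Fin dζ) ℝ) ⊗ₖ Q) * zetaI dζ d ζ x := by
  ext ⟨i, a⟩ b
  simp [zetaI, mul_apply, Fintype.sum_prod_type, one_apply, mul_comm]

lemma transpose_mul_zetaI_sandwich (ζ : (Fin n → ℝ) → Fin dζ → ℝ)
    (Q : Matrix (Fin d) (Fin d) ℝ) (S : Matrix (Fin dζ × Fin d) (Fin dζ × Fin d) ℝ) :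
    Qᵀ * ((zetaI dζ d ζ x)ᵀ * S * zetaI dζ d ζ x) * Q =
      (zetaI dζ d ζ x)ᵀ * ((1 ⊗ₖ Q)ᵀ * S * (1 ⊗ₖ Q)) * zetaI dζ d ζ x := by
  have hT := congrArg transpose (zetaI_mul x ζ Q)
  rw [transpose_mul, transpose_mul] at hT
  calc Qᵀ * ((zetaI dζ d ζ x)ᵀ * S * zetaI dζ d ζ x) * Q
      = (Qᵀ * (zetaI dζ d ζ x)ᵀ) * S * (zetaI dζ d ζ x * Q) := by simp only [Matrix.mul_assoc]
    _ = _ := by rw [hT, zetaI_mul]; simp only [Matrix.mul_assoc]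

variable {P Q : Matrix (Fin d) (Fin d) ℝ} (W : Matrix (Fin dZ) (Fin d) ℝ)

lemma Umat_eq_of_transpose_eq (hP : Pᵀ = P) :
    Umat Dz F G Z x P W = -(P * (Dz x * (F x + G x * Z x * W))) := by
  rw [Umat, hP, ← two_smul ℝ P, smul_smul]
  norm_num

lemma Ymat_eq_mul_Umat_mul (hP : Pᵀ = P) (hQP : Q * P = 1) :
    Ymat Dz F G Z x Q (W * Q) = Q * Umat Dz F G Z x P W * Q := by
  rw [Umat_eq_of_transpose_eq Dz F G Z x W hP, Ymat, Matrix.mul_neg, Matrix.neg_mul,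
    ← Matrix.mul_assoc Q P, hQP, Matrix.one_mul]
  simp only [Matrix.mul_assoc, Matrix.add_mul]

lemma Ymat_add_transpose (hP : Pᵀ = P) (hQ : Qᵀ = Q) (hQP : Q * P = 1) :
    Ymat Dz F G Z x Q (W * Q) + (Ymat Dz F G Z x Q (W * Q))ᵀ =
      Qᵀ * (Umat Dz F G Z x P W + (Umat Dz F G Z x P W)ᵀ) * Q := by
  rw [Ymat_eq_mul_Umat_mul Dz F G Z x W hP hQP, transpose_mul, transpose_mul, hQ,
    Matrix.mul_add, Matrix.add_mul]
  simp only [Matrix.mul_assoc]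

end Certificates

theorem sos_initial_controller_feasibility_general
    {n m d dζ dZ K : ℕ}
    (Dz : (Fin n → ℝ) → Matrix (Fin d) (Fin n) ℝ)
    (ζ : (Fin n → ℝ) → Fin dζ → ℝ)
    (F : Fin K → (Fin n → ℝ) → Matrix (Fin n) (Fin d) ℝ)
    (G : Fin K → (Fin n → ℝ) → Matrix (Fin n) (Fin m) ℝ)
    (Z : (Fin n → ℝ) → Matrix (Fin m) (Fin dZ) ℝ)
    (P : Matrix (Fin d) (Fin d) ℝ) (hP : P.PosDef)
    (W : Matrix (Fin dZ) (Fin d) ℝ)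
    (Ssos : Fin K → Matrix (Fin dζ × Fin d) (Fin dζ × Fin d) ℝ)
    (hSsos : ∀ k, (Ssos k).PosDef)
    (hcert : ∀ (x : Fin n → ℝ) (k : Fin K),
      Umat Dz (F k) (G k) Z x P W + (Umat Dz (F k) (G k) Z x P W)ᵀ =
        (zetaI dζ d ζ x)ᵀ * Ssos k * zetaI dζ d ζ x) :
    ∀ (Q : Matrix (Fin d) (Fin d) ℝ) (H : Matrix (Fin dZ) (Fin d) ℝ)
      (Sb : Fin K → Matrix (Fin dζ × Fin d) (Fin dζ × Fin d) ℝ),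
      Q = P⁻¹ → H = W * P⁻¹ →
      (∀ k, Sb k = ((1 : Matrix (Fin dζ) (Fin dζ) ℝ) ⊗ₖ P⁻¹)ᵀ * Ssos k *
        ((1 : Matrix (Fin dζ) (Fin dζ) ℝ) ⊗ₖ P⁻¹)) →
      ∃ ε : ℝ, 0 < ε ∧
        Qᵀ = Q ∧ (Q - ε • 1).PosSemidef ∧
        (∀ k, (Sb k)ᵀ = Sb k ∧ (Sb k - ε • 1).PosSemidef) ∧
        (∀ (x : Fin n → ℝ) (k : Fin K),
          Ymat Dz (F k) (G k) Z x Q H + (Ymat Dz (F k) (G k) Z x Q H)ᵀ =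
            (zetaI dζ d ζ x)ᵀ * Sb k * zetaI dζ d ζ x) := by
  rintro Q H Sb rfl rfl hSb
  have hQ : P⁻¹.PosDef := hP.inv
  have hB : (1 ⊗ₖ P⁻¹ : Matrix (Fin dζ × Fin d) (Fin dζ × Fin d) ℝ).PosDef :=
    PosDef.one.kronecker hQ
  have hSbpd (k : Fin K) : (Sb k).PosDef := by
    rw [hSb k, ← conjTranspose_eq_transpose_of_trivial]
    exact (hSsos k).conjTranspose_mul_mul_same (mulVec_injective_of_isUnit hB.isUnit)
  obtain ⟨ε, ⟨hεQ, hεS⟩, hε⟩ := ((hQ.eventually_posSemidef_sub_smul_one.and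
    (eventually_all.2 fun k => (hSbpd k).eventually_posSemidef_sub_smul_one)).and
      self_mem_nhdsWithin).exists
  refine ⟨ε, hε, hQ.transpose_eq, hεQ, fun k => ⟨(hSbpd k).transpose_eq, hεS k⟩, fun x k => ?_⟩
  have hQP : P⁻¹ * P = 1 := nonsing_inv_mul P ((isUnit_iff_isUnit_det P).1 hP.isUnit)
  rw [Ymat_add_transpose Dz (F k) (G k) Z x W hP.transpose_eq hQ.transpose_eq hQP, hcert x k,
    transpose_mul_zetaI_sandwich, hSb k]

/-- from an SOS certificate for `U_k(·,P,W)` (with `P` symmetric positive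
definite) one obtains, after the change of variables `Q = P⁻¹`, `H = W P⁻¹`,
`S̄_k = (I ⊗ P⁻¹)ᵀ S_k (I ⊗ P⁻¹)`, a uniformly positive SOS certificate for `Y_k(·,Q,H)`:
there is `ε > 0` (the minimum of the smallest eigenvalues of `Q` and the `S̄_k`) such that
`Q` is symmetric with `Q − εI ⪰ 0`, each `S̄_k` is symmetric with `S̄_k − εI ⪰ 0`, and
`Y_k + Y_kᵀ = (ζ⊗I)ᵀ S̄_k (ζ⊗I)` everywhere. -/
theorem sos_initial_controller_feasibility
    {n m d dζ dZ K : ℕ}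
    (hn : 0 < n) (hm : 0 < m) (hd : 0 < d) (hdζ : 0 < dζ) (hdZ : 0 < dZ) (hK : 0 < K)
    (z : (Fin n → ℝ) → Fin d → ℝ)
    (Dz : (Fin n → ℝ) → Matrix (Fin d) (Fin n) ℝ)
    (hz : ∀ x, HasFDerivAt z (LinearMap.toContinuousLinearMap (Dz x).mulVecLin) x)
    (ζ : (Fin n → ℝ) → Fin dζ → ℝ)
    (F : Fin K → (Fin n → ℝ) → Matrix (Fin n) (Fin d) ℝ)
    (G : Fin K → (Fin n → ℝ) → Matrix (Fin n) (Fin m) ℝ)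
    (Z : (Fin n → ℝ) → Matrix (Fin m) (Fin dZ) ℝ)
    (P : Matrix (Fin d) (Fin d) ℝ) (hP : P.PosDef)
    (W : Matrix (Fin dZ) (Fin d) ℝ)
    (Ssos : Fin K → Matrix (Fin dζ × Fin d) (Fin dζ × Fin d) ℝ)
    (hSsos : ∀ k, (Ssos k).PosDef)
    (hcert : ∀ (x : Fin n → ℝ) (k : Fin K),
      Umat Dz (F k) (G k) Z x P W + (Umat Dz (F k) (G k) Z x P W)ᵀ =
        (zetaI dζ d ζ x)ᵀ * Ssos k * zetaI dζ d ζ x) :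
    ∀ (Q : Matrix (Fin d) (Fin d) ℝ) (H : Matrix (Fin dZ) (Fin d) ℝ)
      (Sb : Fin K → Matrix (Fin dζ × Fin d) (Fin dζ × Fin d) ℝ),
      Q = P⁻¹ → H = W * P⁻¹ →
      (∀ k, Sb k = ((1 : Matrix (Fin dζ) (Fin dζ) ℝ) ⊗ₖ P⁻¹)ᵀ * Ssos k *
        ((1 : Matrix (Fin dζ) (Fin dζ) ℝ) ⊗ₖ P⁻¹)) →
      ∃ ε : ℝ, 0 < ε ∧
        Qᵀ = Q ∧ (Q - ε • 1).PosSemidef ∧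
        (∀ k, (Sb k)ᵀ = Sb k ∧ (Sb k - ε • 1).PosSemidef) ∧
        (∀ (x : Fin n → ℝ) (k : Fin K),
          Ymat Dz (F k) (G k) Z x Q H + (Ymat Dz (F k) (G k) Z x Q H)ᵀ =
            (zetaI dζ d ζ x)ᵀ * Sb k * zetaI dζ d ζ x) :=
  sos_initial_controller_feasibility_general Dz ζ F G Z P hP W Ssos hSsos hcert
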